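/- Coherence: For every defeasible deontic theory D, for every conclusion x (a literal or a rule) and every proof tag # (any of the tags ∂_C, ∂_O, ∂_P on literals or ∂^m_C, ∂^m_O, ∂^m_P on rules), it is not the case that both D ⊢_L +#x and D ⊢_L -#x, for each variant L ∈ {S, C} (Simple Conflict and Cautious Conflict Defeasible Deontic Logic with meta-rules). -/

import Mathlib

namespace DDL

/-!
Defeasible Deontic Logic with Meta-Rules (Olivieri, Governatori, Cristani, Rotolo, Sattar).
Syntax: plain literals, modalities, standard rules, rule expressions, (meta-)rules, theories.
-/


/-- Propositional atoms. -/
abbrev Atom := ℕ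

/-- Rule labels (names). -/
abbrev Label := ℕ

/-- Plain literals: atoms and negated atoms. -/
inductive PLit
  | pos : Atom → PLit
  | neg : Atom → PLit
deriving DecidableEq

/-- The complement `~l` of a plain literal. -/
def PLit.compl : PLit → PLit
  | .pos a => .neg a
  | .neg a => .pos a

/-- Modalities: constitutive (C), obligation (O), permission (P). -/
inductive Modality
  | C | O | P
deriving DecidableEq

/-- The two variants of the logic: Simple Conflict (S) and Cautious Conflict (Cau). -/
inductive Variant
  | S | Cau
deriving DecidableEq

/-- Rules are defeasible rules (⇒) or defeaters (⇝). -/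
inductive ArrowType
  | defeasible | defeater
deriving DecidableEq

/-- Antecedent elements of standard rules: plain literals `l`,
deontic literals `□l` and negated deontic literals `¬□l`. -/
inductive LitElem
  | plain : PLit → LitElem
  | mod : Modality → PLit → LitElem
  | negMod : Modality → PLit → LitElem
deriving DecidableEq

/-- A standard rule `α : A(α) ↪_□ C(α)` where the consequent is an ⊗-chain
of plain literals (a singleton unless the mode is O). -/
structure StdRule where
  label : Label
  ants : Finset LitElem
  arrow : ArrowType
  mode : Modality
  head : List PLit
deriving DecidableEq

/-- A rule expression: a standard rule `α` (pos = true) or its negation `¬α` (pos = false). -/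
structure RuleExpr where
  rule : StdRule
  pos : Bool
deriving DecidableEq

/-- The complement of a rule expression (α ↦ ¬α, ¬α ↦ α). -/
def RuleExpr.compl (e : RuleExpr) : RuleExpr := ⟨e.rule, !e.pos⟩

/-- Antecedent elements of (meta-)rules: literal elements, rule expressions `β`,
deontic rule expressions `□β` and negated deontic rule expressions `¬□β`. -/
inductive AntElem
  | lit : LitElem → AntElem
  | rex : RuleExpr → AntElem
  | modRex : Modality → RuleExpr → AntElem
  | negModRex : Modality → RuleExpr → AntElem
deriving DecidableEq

/-- Consequent (⊗-chain) elements: plain literals or rule expressions. -/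
inductive ConElem
  | lit : PLit → ConElem
  | rex : RuleExpr → ConElem
deriving DecidableEq

/-- Complement of a consequent element. -/
def ConElem.compl : ConElem → ConElem
  | .lit l => .lit l.compl
  | .rex e => .rex e.compl

/-- A (possibly meta-) rule: at most one level of nesting, since nested rules
in antecedents and consequents are standard rules. -/
structure Rule where
  label : Label
  ants : Finset AntElem
  arrow : ArrowType
  mode : Modality
  head : List ConElem
deriving DecidableEq

/-- A standard rule viewed as a rule. -/
def StdRule.toRule (r : StdRule) : Rule :=
  ⟨r.label, r.ants.image AntElem.lit, r.arrow, r.mode, r.head.map ConElem.lit⟩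

/-- A signed (possibly meta-) rule: a rule or its negation. -/
abbrev SRule := Rule × Bool

def RuleExpr.toSRule (e : RuleExpr) : SRule := (e.rule.toRule, e.pos)

/-- A defeasible deontic theory `D = (F, R, >)`: a finite set of facts
(plain literals), a finite set of rules, and a superiority relation over rules. -/
structure Theory where
  F : Finset PLit
  R : Finset Rule
  sup : Finset (Rule × Rule)

/-- The standard rule (if any) nested in an antecedent element. -/
def AntElem.nested : AntElem → Option RuleExpr
  | .lit _ => none
  | .rex e => some e
  | .modRex _ e => some e
  | .negModRex _ e => some e

/-- The rules appearing (nested) in a rule. -/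
def Rule.nestedRules (r : Rule) : Set Rule :=
  {s | (∃ a ∈ r.ants, ∃ e, a.nested = some e ∧ s = e.rule.toRule) ∨
       (∃ c ∈ r.head, ∃ e, c = ConElem.rex e ∧ s = e.rule.toRule)}

/-- The rules appearing in a theory: the rules of `R` together with the rules
nested in them. -/
def Theory.rules (D : Theory) : Set Rule :=
  {r | r ∈ D.R ∨ ∃ m ∈ D.R, r ∈ m.nestedRules}

/-- Two rules have the same content when they have the same antecedent, arrow,
mode and consequent (the labels may differ). -/
def Rule.contentEq (r s : Rule) : Prop :=
  r.ants = s.ants ∧ r.arrow = s.arrow ∧ r.mode = s.mode ∧ r.head = s.head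

/-- `y` is (a rule expression standing for) the negation of a rule with the same
content as `x`. -/
def SRule.negContentOf (y x : SRule) : Prop :=
  x.1.contentEq y.1 ∧ y.2 = !x.2

/-- The superiority relation of a theory, as a relation. -/
def Theory.supRel (D : Theory) : Rule → Rule → Prop := fun a b => (a, b) ∈ D.sup

/-- A relation is acyclic when its transitive closure has no cycle. -/
def Acyclic {β : Type*} (r : β → β → Prop) : Prop := ∀ a, ¬ Relation.TransGen r a a

/-- `C(ζ) > C(γ)`: the standard rules concluded by the two meta-rules are in the
superiority relation. -/
def headSup (D : Theory) (ζ γ : Rule) : Prop :=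
  ∃ eζ eγ : RuleExpr, ConElem.rex eζ ∈ ζ.head ∧ ConElem.rex eγ ∈ γ.head ∧
    (eζ.rule.toRule, eγ.rule.toRule) ∈ D.sup

/-- The extended superiority relation
`≻ = > ∪ {(α,β) | (α,β) ∉ > ∧ (C(α),C(β)) ∈ >}`. -/
def Theory.extSupRel (D : Theory) : Rule → Rule → Prop := fun a b =>
  (a, b) ∈ D.sup ∨ ((a, b) ∉ D.sup ∧ headSup D a b)

/-! Conflicts between rules / rule expressions (Definitions 13 and 14). -/

/-- Simple conflict (Definition 13): `β` is the negation of a rule with the same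
content as `α` (condition 1), or the consequent ⊗-chains of the two meta-rules
contain, at some indices, simply conflicting rule expressions (condition 2). -/
inductive SimplyConflicts : SRule → SRule → Prop
  | negation {r s : Rule} {b : Bool} :
      r.contentEq s → SimplyConflicts (r, b) (s, !b)
  | chain {r s : Rule} {br bs : Bool} {ν ζ : RuleExpr} :
      ConElem.rex ν ∈ r.head → ConElem.rex ζ ∈ s.head →
      SimplyConflicts ν.toSRule ζ.toSRule →
      SimplyConflicts (r, br) (s, bs)

/-- Cautious conflict (Definition 14). -/
inductive CautiouslyConflicts : SRule → SRule → Prop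
  /-- (1) `β` is the negation of a rule with the same content as `α`. -/
  | negation {r s : Rule} {b : Bool} :
      r.contentEq s → CautiouslyConflicts (r, b) (s, !b)
  /-- (2) same antecedent, arrow and mode, complementary conclusions. -/
  | oppositeHead {r s : Rule} {c : ConElem} :
      r.ants = s.ants → r.arrow = s.arrow → r.mode = s.mode →
      r.head = [c] → s.head = [c.compl] →
      CautiouslyConflicts (r, true) (s, true)
  /-- (3) an obligation rule and a permission rule with the same antecedent and
  complementary conclusions. -/
  | oblPerm {r s : Rule} {c : ConElem} :
      r.ants = s.ants → r.arrow = s.arrow →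
      r.mode = .O → s.mode = .P →
      r.head = [c] → s.head = [c.compl] →
      CautiouslyConflicts (r, true) (s, true)
  /-- (4a) obligation rules with the same antecedent whose ⊗-chains agree up to
  index `i` and have complementary elements at index `i`. -/
  | chainDiverge {r s : Rule} {i : ℕ} {ci cs : ConElem} :
      r.ants = s.ants → r.arrow = .defeasible → s.arrow = .defeasible →
      r.mode = .O → s.mode = .O →
      (∀ k < i, r.head[k]? = s.head[k]?) →
      r.head[i]? = some ci → s.head[i]? = some cs → ci = cs.compl →
      CautiouslyConflicts (r, true) (s, true)
  /-- (4b) obligation rules with the same antecedent, the ⊗-chain of the first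
  being a proper prefix of the ⊗-chain of the second. -/
  | chainPrefix {r s : Rule} :
      r.ants = s.ants → r.arrow = .defeasible → s.arrow = .defeasible →
      r.mode = .O → s.mode = .O →
      r.head.length < s.head.length →
      r.head <+: s.head →
      CautiouslyConflicts (r, true) (s, true)
  /-- (5) the consequent ⊗-chains of the two meta-rules contain, at some
  indices, cautiously conflicting rule expressions. -/
  | chain {r s : Rule} {br bs : Bool} {ν ζ : RuleExpr} :
      ConElem.rex ν ∈ r.head → ConElem.rex ζ ∈ s.head →
      CautiouslyConflicts ν.toSRule ζ.toSRule →
      CautiouslyConflicts (r, br) (s, bs)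

/-- Symmetric closure of simple conflict ("α conflicts with β and the other way
around"). -/
def sConf (x y : SRule) : Prop := SimplyConflicts x y ∨ SimplyConflicts y x

/-- Symmetric closure of cautious conflict. -/
def cConf (x y : SRule) : Prop := CautiouslyConflicts x y ∨ CautiouslyConflicts y x

/-- The conflict notion associated with each variant of the logic. -/
def Variant.conf : Variant → SRule → SRule → Prop
  | .S => sConf
  | .Cau => cConf

/-! Tagged modal formulas, applicability, proof conditions and provability. -/

/-- A conclusion: a plain literal or a (signed) rule. -/
inductive Concl
  | lit : PLit → Concl
  | rul : Rule → Bool → Concl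
deriving DecidableEq

/-- A tagged modal formula `±∂_□ l` / `±∂^m_□ α`: sign (`true` = +, `false` = −),
mode, and conclusion. -/
abbrev Tag := Bool × Modality × Concl

def ConElem.toConcl : ConElem → Concl
  | .lit l => .lit l
  | .rex e => .rul e.rule.toRule e.pos

/-- An antecedent element holds relative to the set `Pr` of already proved
tagged formulas (Definition 15, conditions 1–3 and 1'–3'). -/
def antHolds (Pr : Tag → Prop) : AntElem → Prop
  | .lit (.plain l) => Pr (true, .C, .lit l)
  | .lit (.mod m l) => Pr (true, m, .lit l)
  | .lit (.negMod m l) => Pr (false, m, .lit l)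
  | .rex e => Pr (true, .C, .rul e.rule.toRule e.pos)
  | .modRex m e => Pr (true, m, .rul e.rule.toRule e.pos)
  | .negModRex m e => Pr (false, m, .rul e.rule.toRule e.pos)

/-- An antecedent element fails, relative to `Pr` (Definition 16). -/
def antFails (Pr : Tag → Prop) : AntElem → Prop
  | .lit (.plain l) => Pr (false, .C, .lit l)
  | .lit (.mod m l) => Pr (false, m, .lit l)
  | .lit (.negMod m l) => Pr (true, m, .lit l)
  | .rex e => Pr (false, .C, .rul e.rule.toRule e.pos)
  | .modRex m e => Pr (false, m, .rul e.rule.toRule e.pos)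
  | .negModRex m e => Pr (true, m, .rul e.rule.toRule e.pos)

/-- An earlier ⊗-chain element is a violated obligation (Definition 15, cond. 4). -/
def conViolated (Pr : Tag → Prop) : ConElem → Prop
  | .lit l => Pr (true, .O, .lit l) ∧ Pr (true, .C, .lit l.compl)
  | .rex e => Pr (true, .O, .rul e.rule.toRule e.pos) ∧ Pr (false, .C, .rul e.rule.toRule e.pos)

/-- Strong negation of `conViolated` (Definition 16, cond. 4). -/
def conNotViolated (Pr : Tag → Prop) : ConElem → Prop
  | .lit l => Pr (false, .O, .lit l) ∨ Pr (false, .C, .lit l.compl)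
  | .rex e => Pr (false, .O, .rul e.rule.toRule e.pos) ∨ Pr (true, .C, .rul e.rule.toRule e.pos)

/-- Applicability of a rule (Definition 15): the rule itself is provable with
mode C and every antecedent element holds. -/
def Applicable (Pr : Tag → Prop) (α : Rule) : Prop :=
  Pr (true, .C, .rul α true) ∧ ∀ a ∈ α.ants, antHolds Pr a

/-- Applicability of an obligation rule at index `i` of its ⊗-chain. -/
def ApplicableAt (Pr : Tag → Prop) (α : Rule) (i : ℕ) : Prop :=
  Applicable Pr α ∧ ∀ j < i, ∀ c, α.head[j]? = some c → conViolated Pr c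

/-- Discardability of a rule (Definition 16): strong negation of applicability. -/
def Discarded (Pr : Tag → Prop) (α : Rule) : Prop :=
  Pr (false, .C, .rul α true) ∨ ∃ a ∈ α.ants, antFails Pr a

/-- Discardability of an obligation rule at index `i`. -/
def DiscardedAt (Pr : Tag → Prop) (α : Rule) (i : ℕ) : Prop :=
  Discarded Pr α ∨ ∃ j < i, ∃ c, α.head[j]? = some c ∧ conNotViolated Pr c

/-- `l` occurs at index `i` of the ⊗-chain of `α`. -/
def Rule.litAt (α : Rule) (l : PLit) (i : ℕ) : Prop := α.head[i]? = some (ConElem.lit l)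

/-- The signed rule `x` occurs at index `i` of the ⊗-chain of `α`. -/
def Rule.rexAt (α : Rule) (x : SRule) (i : ℕ) : Prop :=
  ∃ e : RuleExpr, α.head[i]? = some (ConElem.rex e) ∧ e.toSRule = x

def Rule.concludesLit (α : Rule) (l : PLit) : Prop := ConElem.lit l ∈ α.head

def Rule.concludesRex (α : Rule) (x : SRule) : Prop :=
  ∃ e : RuleExpr, ConElem.rex e ∈ α.head ∧ e.toSRule = x

/-! ### Proof conditions for literals (Definitions 4, 5, 6) -/

/-- `+∂_C l` (Definition 4). -/
def plusC (D : Theory) (Pr : Tag → Prop) (l : PLit) : Prop :=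
  l ∈ D.F ∨
  (l.compl ∉ D.F ∧
    (∃ β ∈ D.rules, β.mode = .C ∧ β.arrow = .defeasible ∧ β.concludesLit l ∧
        Applicable Pr β) ∧
    ∀ γ ∈ D.rules, γ.mode = .C → γ.concludesLit l.compl →
      (Discarded Pr γ ∨
        ∃ ζ ∈ D.rules, ζ.mode = .C ∧ ζ.concludesLit l ∧ Applicable Pr ζ ∧ (ζ, γ) ∈ D.sup))

/-- `−∂_C l` (Definition 4). -/
def minusC (D : Theory) (Pr : Tag → Prop) (l : PLit) : Prop :=
  l ∉ D.F ∧
  (l.compl ∈ D.F ∨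
    (∀ β ∈ D.rules, β.mode = .C → β.arrow = .defeasible → β.concludesLit l →
        Discarded Pr β) ∨
    ∃ γ ∈ D.rules, γ.mode = .C ∧ γ.concludesLit l.compl ∧ Applicable Pr γ ∧
      ∀ ζ ∈ D.rules, ζ.mode = .C → ζ.concludesLit l → (Discarded Pr ζ ∨ (ζ, γ) ∉ D.sup))

/-- `+∂_O l` (Definition 5). -/
def plusO (D : Theory) (Pr : Tag → Prop) (l : PLit) : Prop :=
  (∃ β ∈ D.rules, β.mode = .O ∧ β.arrow = .defeasible ∧
      ∃ i, β.litAt l i ∧ ApplicableAt Pr β i) ∧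
  (∀ γ ∈ D.rules,
    (γ.mode = .O → ∀ j, γ.litAt l.compl j →
      (DiscardedAt Pr γ j ∨
        ∃ ζ ∈ D.rules, ζ.mode = .O ∧ (∃ k, ζ.litAt l k ∧ ApplicableAt Pr ζ k) ∧
          (ζ, γ) ∈ D.sup)) ∧
    (γ.mode = .P → γ.concludesLit l.compl →
      (Discarded Pr γ ∨
        ∃ ζ ∈ D.rules, ζ.mode = .O ∧ (∃ k, ζ.litAt l k ∧ ApplicableAt Pr ζ k) ∧
          (ζ, γ) ∈ D.sup)))

/-- `−∂_O l` (Definition 5). -/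
def minusO (D : Theory) (Pr : Tag → Prop) (l : PLit) : Prop :=
  (∀ β ∈ D.rules, β.mode = .O → β.arrow = .defeasible → ∀ i, β.litAt l i →
      DiscardedAt Pr β i) ∨
  (∃ γ ∈ D.rules,
    ((γ.mode = .O ∧ ∃ j, γ.litAt l.compl j ∧ ApplicableAt Pr γ j) ∨
     (γ.mode = .P ∧ γ.concludesLit l.compl ∧ Applicable Pr γ)) ∧
    ∀ ζ ∈ D.rules, ζ.mode = .O → ∀ k, ζ.litAt l k →
      (DiscardedAt Pr ζ k ∨ (ζ, γ) ∉ D.sup))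

/-- `+∂_P l` (Definition 6). -/
def plusP (D : Theory) (Pr : Tag → Prop) (l : PLit) : Prop :=
  Pr (true, .O, .lit l) ∨
  ((∃ β ∈ D.rules, β.mode = .P ∧ β.arrow = .defeasible ∧ β.concludesLit l ∧
      Applicable Pr β) ∧
   ∀ γ ∈ D.rules, γ.mode = .O → ∀ j, γ.litAt l.compl j →
     (DiscardedAt Pr γ j ∨
      ∃ ζ ∈ D.rules,
        ((ζ.mode = .P ∧ ζ.concludesLit l ∧ Applicable Pr ζ) ∨
         (ζ.mode = .O ∧ ∃ k, ζ.litAt l k ∧ ApplicableAt Pr ζ k)) ∧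
        (ζ, γ) ∈ D.sup))

/-- `−∂_P l` (Definition 6). -/
def minusP (D : Theory) (Pr : Tag → Prop) (l : PLit) : Prop :=
  Pr (false, .O, .lit l) ∧
  ∀ β ∈ D.rules, β.mode = .P → β.arrow = .defeasible → β.concludesLit l →
    (Discarded Pr β ∨
     ∃ γ ∈ D.rules, γ.mode = .O ∧ (∃ j, γ.litAt l.compl j ∧ ApplicableAt Pr γ j) ∧
       ∀ ζ ∈ D.rules,
         (ζ.mode = .P → ζ.concludesLit l → (Discarded Pr ζ ∨ (ζ, γ) ∉ D.sup)) ∧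
         (ζ.mode = .O → ∀ k, ζ.litAt l k → (DiscardedAt Pr ζ k ∨ (ζ, γ) ∉ D.sup)))

/-! ### Meta-proof conditions, Simple Conflict variant (Definitions 9, 10, 12) -/

/-- A candidate defeater conclusion `z` for `x` given the attacked expression
`y`: same content and sign as `x`, labelled either as `x` or as `y`
("χ ∈ {α, φ}"). -/
def reinstates (x y z : SRule) : Prop :=
  z.2 = x.2 ∧ z.1.contentEq x.1 ∧ (z.1.label = x.1.label ∨ z.1.label = y.1.label)

/-- `+∂^m_C α`, simple variant (Definition 9). -/
def plusMCS (D : Theory) (Pr : Tag → Prop) (x : SRule) : Prop :=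
  (x.2 = true ∧ x.1 ∈ D.R) ∨
  ((∀ ω ∈ D.R, ¬ sConf (ω, true) x) ∧
   (∃ β ∈ D.rules, β.mode = .C ∧ β.arrow = .defeasible ∧ β.concludesRex x ∧
      Applicable Pr β) ∧
   ∀ γ ∈ D.rules, γ.mode = .C → ∀ y : SRule, γ.concludesRex y → y.negContentOf x →
     (Discarded Pr γ ∨
      ∃ ζ ∈ D.rules, ζ.mode = .C ∧ (∃ z, ζ.concludesRex z ∧ reinstates x y z) ∧
        Applicable Pr ζ ∧ (ζ, γ) ∈ D.sup))

/-- `−∂^m_C α`, simple variant (Definition 9). -/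
def minusMCS (D : Theory) (Pr : Tag → Prop) (x : SRule) : Prop :=
  ¬ (x.2 = true ∧ x.1 ∈ D.R) ∧
  ((∃ ρ ∈ D.R, sConf (ρ, true) x) ∨
   ∀ β ∈ D.rules, β.mode = .C → β.arrow = .defeasible → β.concludesRex x →
     (Discarded Pr β ∨
      ∃ γ ∈ D.rules, γ.mode = .C ∧ (∃ y, γ.concludesRex y ∧ y.negContentOf x ∧
        Applicable Pr γ ∧
        ∀ ζ ∈ D.rules, ζ.mode = .C → ∀ z, ζ.concludesRex z → reinstates x y z →
          (Discarded Pr ζ ∨ (ζ, γ) ∉ D.sup))))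

/-- `+∂^m_O α`, simple variant (Definition 10). -/
def plusMOS (D : Theory) (Pr : Tag → Prop) (x : SRule) : Prop :=
  (∃ β ∈ D.rules, β.mode = .O ∧ β.arrow = .defeasible ∧
      ∃ i, β.rexAt x i ∧ ApplicableAt Pr β i) ∧
  ∀ γ ∈ D.rules, ∀ y : SRule, y.negContentOf x →
    ((γ.mode = .O → ∀ j, γ.rexAt y j →
        (DiscardedAt Pr γ j ∨
         ∃ ζ ∈ D.rules, ζ.mode = .O ∧
           (∃ k z, ζ.rexAt z k ∧ reinstates x y z ∧ ApplicableAt Pr ζ k) ∧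
           (ζ, γ) ∈ D.sup)) ∧
     (γ.mode = .P → γ.concludesRex y →
        (Discarded Pr γ ∨
         ∃ ζ ∈ D.rules, ζ.mode = .O ∧
           (∃ k z, ζ.rexAt z k ∧ reinstates x y z ∧ ApplicableAt Pr ζ k) ∧
           (ζ, γ) ∈ D.sup)))

/-- `−∂^m_O α`, simple variant (Definition 10). -/
def minusMOS (D : Theory) (Pr : Tag → Prop) (x : SRule) : Prop :=
  (∀ β ∈ D.rules, β.mode = .O → β.arrow = .defeasible → ∀ i, β.rexAt x i →
      DiscardedAt Pr β i) ∨
  (∃ γ ∈ D.rules, ∃ y : SRule, y.negContentOf x ∧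
    ((γ.mode = .O ∧ ∃ j, γ.rexAt y j ∧ ApplicableAt Pr γ j) ∨
     (γ.mode = .P ∧ γ.concludesRex y ∧ Applicable Pr γ)) ∧
    ∀ ζ ∈ D.rules, ζ.mode = .O → ∀ k z, ζ.rexAt z k → reinstates x y z →
      (DiscardedAt Pr ζ k ∨ (ζ, γ) ∉ D.sup))

/-- `+∂^m_P α`, simple variant (Definition 12). -/
def plusMPS (D : Theory) (Pr : Tag → Prop) (x : SRule) : Prop :=
  Pr (true, .O, .rul x.1 x.2) ∨
  ((∃ β ∈ D.rules, β.mode = .P ∧ β.arrow = .defeasible ∧ β.concludesRex x ∧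
      Applicable Pr β) ∧
   ∀ γ ∈ D.rules, γ.mode = .O → ∀ y : SRule, y.negContentOf x → ∀ j, γ.rexAt y j →
     (DiscardedAt Pr γ j ∨
      ∃ ζ ∈ D.rules,
        ((ζ.mode = .P ∧ ∃ z, ζ.concludesRex z ∧ reinstates x y z ∧ Applicable Pr ζ) ∨
         (ζ.mode = .O ∧ ∃ k z, ζ.rexAt z k ∧ reinstates x y z ∧ ApplicableAt Pr ζ k)) ∧
        (ζ, γ) ∈ D.sup))

/-- `−∂^m_P α`, simple variant (Definition 12). -/
def minusMPS (D : Theory) (Pr : Tag → Prop) (x : SRule) : Prop :=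
  Pr (false, .O, .rul x.1 x.2) ∧
  ∀ β ∈ D.rules, β.mode = .P → β.arrow = .defeasible → β.concludesRex x →
    (Discarded Pr β ∨
     ∃ γ ∈ D.rules, γ.mode = .O ∧
       (∃ y : SRule, y.negContentOf x ∧ (∃ j, γ.rexAt y j ∧ ApplicableAt Pr γ j) ∧
        ∀ ζ ∈ D.rules,
          ((ζ.mode = .P → ∀ z, ζ.concludesRex z → reinstates x y z →
              (Discarded Pr ζ ∨ (ζ, γ) ∉ D.sup)) ∧
           (ζ.mode = .O → ∀ k z, ζ.rexAt z k → reinstates x y z →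
              (DiscardedAt Pr ζ k ∨ (ζ, γ) ∉ D.sup)))))

/-! ### Meta-proof conditions, Cautious Conflict variant (Definitions 17, 18, 19) -/

/-- The cautious-variant defeat condition on the superiority relation:
`ζ > γ`, or `γ ≯ ζ` and `C(ζ) > C(γ)`. -/
def supC (D : Theory) (ζ γ : Rule) : Prop :=
  (ζ, γ) ∈ D.sup ∨ ((γ, ζ) ∉ D.sup ∧ headSup D ζ γ)

/-- `+∂^m_C α`, cautious variant (Definition 17). -/
def plusMCC (D : Theory) (Pr : Tag → Prop) (x : SRule) : Prop :=
  (x.2 = true ∧ x.1 ∈ D.R) ∨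
  ((∀ ω ∈ D.R, ¬ cConf (ω, true) x) ∧
   ∃ β ∈ D.rules, β.mode = .C ∧ β.arrow = .defeasible ∧ β.concludesRex x ∧
     Applicable Pr β ∧
     ∀ γ ∈ D.rules, γ.mode = .C → cConf (γ, true) (β, true) →
       (Discarded Pr γ ∨
        ∃ ζ ∈ D.rules, ζ.mode = .C ∧ cConf (ζ, true) (γ, true) ∧ Applicable Pr ζ ∧
          supC D ζ γ))

/-- `−∂^m_C α`, cautious variant (Definition 17). -/
def minusMCC (D : Theory) (Pr : Tag → Prop) (x : SRule) : Prop :=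
  ¬ (x.2 = true ∧ x.1 ∈ D.R) ∧
  ((∃ ω ∈ D.R, cConf (ω, true) x) ∨
   ∀ β ∈ D.rules, β.mode = .C → β.arrow = .defeasible → β.concludesRex x →
     (Discarded Pr β ∨
      ∃ γ ∈ D.rules, γ.mode = .C ∧ cConf (γ, true) (β, true) ∧ Applicable Pr γ ∧
        ∀ ζ ∈ D.rules, ζ.mode = .C → cConf (ζ, true) (γ, true) →
          (Discarded Pr ζ ∨ ¬ supC D ζ γ)))

/-- A cautious defeater for an attacking rule `γ`, obligation case (Def. 18). -/
def defeatMOC (D : Theory) (Pr : Tag → Prop) (γ : Rule) : Prop :=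
  ∃ ζ ∈ D.rules, ζ.mode = .O ∧ cConf ((ζ : Rule), true) (γ, true) ∧
    (∃ k z, ζ.rexAt z k ∧ ApplicableAt Pr ζ k) ∧ supC D ζ γ

/-- `+∂^m_O α`, cautious variant (Definition 18). -/
def plusMOC (D : Theory) (Pr : Tag → Prop) (x : SRule) : Prop :=
  ∃ β ∈ D.rules, β.mode = .O ∧ β.arrow = .defeasible ∧
    (∃ i, β.rexAt x i ∧ ApplicableAt Pr β i) ∧
    ∀ γ ∈ D.rules, cConf ((γ : Rule), true) (β, true) →
      ((γ.mode = .O → ∀ j y, γ.rexAt y j → (DiscardedAt Pr γ j ∨ defeatMOC D Pr γ)) ∧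
       (γ.mode = .P → (Discarded Pr γ ∨ defeatMOC D Pr γ)))

/-- `−∂^m_O α`, cautious variant (Definition 18). -/
def minusMOC (D : Theory) (Pr : Tag → Prop) (x : SRule) : Prop :=
  ∀ β ∈ D.rules, β.mode = .O → β.arrow = .defeasible → ∀ i, β.rexAt x i →
    (DiscardedAt Pr β i ∨
     ∃ γ ∈ D.rules, cConf ((γ : Rule), true) (β, true) ∧
       ((γ.mode = .O ∧ ∃ j y, γ.rexAt y j ∧ ApplicableAt Pr γ j) ∨
        (γ.mode = .P ∧ Applicable Pr γ)) ∧
       ∀ ζ ∈ D.rules, ζ.mode = .O → cConf ((ζ : Rule), true) (γ, true) →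
         ((∀ k z, ζ.rexAt z k → DiscardedAt Pr ζ k) ∨ ¬ supC D ζ γ))

/-- A cautious defeater for an attacking rule `γ`, permission case (Def. 19). -/
def defeatMPC (D : Theory) (Pr : Tag → Prop) (γ : Rule) : Prop :=
  ∃ ζ ∈ D.rules, cConf ((ζ : Rule), true) (γ, true) ∧
    ((ζ.mode = .O ∧ ∃ k z, ζ.rexAt z k ∧ ApplicableAt Pr ζ k) ∨
     (ζ.mode = .P ∧ Applicable Pr ζ)) ∧ supC D ζ γ

/-- `+∂^m_P α`, cautious variant (Definition 19). -/
def plusMPC (D : Theory) (Pr : Tag → Prop) (x : SRule) : Prop :=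
  ∃ β ∈ D.rules, β.mode = .P ∧ β.arrow = .defeasible ∧ β.concludesRex x ∧
    Applicable Pr β ∧
    ∀ γ ∈ D.rules, cConf ((γ : Rule), true) (β, true) →
      ((γ.mode = .O → ∀ j y, γ.rexAt y j → (DiscardedAt Pr γ j ∨ defeatMPC D Pr γ)) ∧
       (γ.mode = .P → (Discarded Pr γ ∨ defeatMPC D Pr γ)))

/-- `−∂^m_P α`, cautious variant (Definition 19). -/
def minusMPC (D : Theory) (Pr : Tag → Prop) (x : SRule) : Prop :=
  ∀ β ∈ D.rules, β.mode = .P → β.arrow = .defeasible → β.concludesRex x →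
    (Discarded Pr β ∨
     ∃ γ ∈ D.rules, cConf ((γ : Rule), true) (β, true) ∧
       ((γ.mode = .O ∧ ∃ j y, γ.rexAt y j ∧ ApplicableAt Pr γ j) ∨
        (γ.mode = .P ∧ Applicable Pr γ)) ∧
       ∀ ζ ∈ D.rules, cConf ((ζ : Rule), true) (γ, true) →
         (((ζ.mode = .O → ∀ k z, ζ.rexAt z k → DiscardedAt Pr ζ k) ∧
           (ζ.mode = .P → Discarded Pr ζ)) ∨ ¬ supC D ζ γ))

/-! ### Provability -/

/-- The one-step proof conditions of the logic: `Cond D V Pr t` holds when the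
tagged modal formula `t` may be appended to a proof whose previous steps are
(included in) `Pr`, according to variant `V`. -/
def Cond (D : Theory) (V : Variant) (Pr : Tag → Prop) : Tag → Prop
  | (true, .C, .lit l) => plusC D Pr l
  | (false, .C, .lit l) => minusC D Pr l
  | (true, .O, .lit l) => plusO D Pr l
  | (false, .O, .lit l) => minusO D Pr l
  | (true, .P, .lit l) => plusP D Pr l
  | (false, .P, .lit l) => minusP D Pr l
  | (true, .C, .rul r b) =>
      match V with | .S => plusMCS D Pr (r, b) | .Cau => plusMCC D Pr (r, b)
  | (false, .C, .rul r b) =>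
      match V with | .S => minusMCS D Pr (r, b) | .Cau => minusMCC D Pr (r, b)
  | (true, .O, .rul r b) =>
      match V with | .S => plusMOS D Pr (r, b) | .Cau => plusMOC D Pr (r, b)
  | (false, .O, .rul r b) =>
      match V with | .S => minusMOS D Pr (r, b) | .Cau => minusMOC D Pr (r, b)
  | (true, .P, .rul r b) =>
      match V with | .S => plusMPS D Pr (r, b) | .Cau => plusMPC D Pr (r, b)
  | (false, .P, .rul r b) =>
      match V with | .S => minusMPS D Pr (r, b) | .Cau => minusMPC D Pr (r, b)

/-- The tagged formulas provable by proofs of length at most `n`. -/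
def ProvesAt (D : Theory) (V : Variant) : ℕ → Tag → Prop
  | 0, _ => False
  | n + 1, t => ProvesAt D V n t ∨ Cond D V (ProvesAt D V n) t

/-- `D ⊢_V t`: there is a proof of the tagged modal formula `t` from `D`
according to the proof conditions of variant `V`. -/
def Proves (D : Theory) (V : Variant) (t : Tag) : Prop := ∃ n, ProvesAt D V n t

/-!
Every negative proof condition is the strong negation of the positive one: where `+#x` asks
for an applicable rule, `-#x` asks that it be discarded, and where `+#x` asks for a defeater,
`-#x` asks that it be discarded or not superior. An applicable rule cannot be discarded as long
as no formula it depends on is proved both positively and negatively, so the conditions for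
`+#x` and `-#x` cannot both hold over two mutually compatible stages of a proof. Every formula
in a proof is justified by its conditions over a strictly shorter proof, hence strong induction
on the sum of the two proof lengths shows that all stages are compatible.
-/

def Compatible (P Q : Tag → Prop) : Prop :=
  ∀ b m x, P (b, m, x) → Q (!b, m, x) → False

namespace Compatible

variable {P Q : Tag → Prop} {D : Theory}

theorem symm (h : Compatible P Q) : Compatible Q P := fun b m x hQ hP =>
  h (!b) m x hP (by rwa [Bool.not_not])

theorem not_antFails (h : Compatible P Q) {a : AntElem} (ha : antHolds P a) :
    ¬ antFails Q a := by
  cases a with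
  | lit e =>
    cases e with
    | plain l => exact h true .C _ ha
    | mod m l => exact h true m _ ha
    | negMod m l => exact h false m _ ha
  | rex e => exact h true .C _ ha
  | modRex m e => exact h true m _ ha
  | negModRex m e => exact h false m _ ha

theorem not_discarded (h : Compatible P Q) {α : Rule} (hα : Applicable P α) :
    ¬ Discarded Q α := by
  rintro (hneg | ⟨a, ha, hfails⟩)
  · exact h true .C _ hα.1 hneg
  · exact h.not_antFails (hα.2 a ha) hfails

theorem not_conNotViolated (h : Compatible P Q) {c : ConElem} (hc : conViolated P c) :
    ¬ conNotViolated Q c := by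
  cases c with
  | lit l =>
    rintro (hO | hC)
    · exact h true .O _ hc.1 hO
    · exact h true .C _ hc.2 hC
  | rex e =>
    rintro (hO | hC)
    · exact h true .O _ hc.1 hO
    · exact h false .C _ hc.2 hC

theorem not_discardedAt (h : Compatible P Q) {α : Rule} {i : ℕ} (hα : ApplicableAt P α i) :
    ¬ DiscardedAt Q α i := by
  rintro (hdisc | ⟨j, hj, c, hc, hnv⟩)
  · exact h.not_discarded hα.1 hdisc
  · exact h.not_conNotViolated (hα.2 j hj c hc) hnv

theorem not_minusC (h : Compatible P Q) {l : PLit} (hp : plusC D P l) : ¬ minusC D Q l := by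
  rintro ⟨hnF, hm⟩
  rcases hp with hF | ⟨hncF, ⟨β, hβ, hβC, hβd, hβl, hβapp⟩, hdefeat⟩
  · exact hnF hF
  rcases hm with hcF | hdisc | ⟨γ, hγ, hγC, hγl, hγapp, hγwins⟩
  · exact hncF hcF
  · exact h.not_discarded hβapp (hdisc β hβ hβC hβd hβl)
  rcases hdefeat γ hγ hγC hγl with hd | ⟨ζ, hζ, hζC, hζl, hζapp, hsup⟩
  · exact h.symm.not_discarded hγapp hd
  rcases hγwins ζ hζ hζC hζl with hd | hnsup
  · exact h.not_discarded hζapp hd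
  · exact hnsup hsup

theorem not_minusO (h : Compatible P Q) {l : PLit} (hp : plusO D P l) : ¬ minusO D Q l := by
  obtain ⟨⟨β, hβ, hβO, hβd, i, hβl, hβapp⟩, hdefeat⟩ := hp
  rintro (hdisc | ⟨γ, hγ, hγattack, hγwins⟩)
  · exact h.not_discardedAt hβapp (hdisc β hβ hβO hβd i hβl)
  have hbeaten : ∀ ζ ∈ D.rules, ζ.mode = .O → (∃ k, ζ.litAt l k ∧ ApplicableAt P ζ k) →
      (ζ, γ) ∉ D.sup := by
    rintro ζ hζ hζO ⟨k, hζl, hζapp⟩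
    exact (hγwins ζ hζ hζO k hζl).resolve_left (h.not_discardedAt hζapp)
  rcases hγattack with ⟨hγO, j, hγl, hγapp⟩ | ⟨hγP, hγl, hγapp⟩
  · rcases (hdefeat γ hγ).1 hγO j hγl with hd | ⟨ζ, hζ, hζO, hζapp, hsup⟩
    · exact h.symm.not_discardedAt hγapp hd
    · exact hbeaten ζ hζ hζO hζapp hsup
  · rcases (hdefeat γ hγ).2 hγP hγl with hd | ⟨ζ, hζ, hζO, hζapp, hsup⟩
    · exact h.symm.not_discarded hγapp hd
    · exact hbeaten ζ hζ hζO hζapp hsup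

theorem not_minusP (h : Compatible P Q) {l : PLit} (hp : plusP D P l) : ¬ minusP D Q l := by
  rintro ⟨hnO, hm⟩
  rcases hp with hO | ⟨⟨β, hβ, hβP, hβd, hβl, hβapp⟩, hdefeat⟩
  · exact h true .O _ hO hnO
  rcases hm β hβ hβP hβd hβl with hd | ⟨γ, hγ, hγO, ⟨j, hγl, hγapp⟩, hγwins⟩
  · exact h.not_discarded hβapp hd
  rcases hdefeat γ hγ hγO j hγl with hd | ⟨ζ, hζ, hζattack, hsup⟩
  · exact h.symm.not_discardedAt hγapp hd
  rcases hζattack with ⟨hζP, hζl, hζapp⟩ | ⟨hζO, k, hζl, hζapp⟩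
  · exact ((hγwins ζ hζ).1 hζP hζl).elim (h.not_discarded hζapp) (· hsup)
  · exact ((hγwins ζ hζ).2 hζO k hζl).elim (h.not_discardedAt hζapp) (· hsup)

theorem not_minusMCS (h : Compatible P Q) {x : SRule} (hp : plusMCS D P x) :
    ¬ minusMCS D Q x := by
  rintro ⟨hnR, hm⟩
  rcases hp with hR | ⟨hnconf, ⟨β, hβ, hβC, hβd, hβx, hβapp⟩, hdefeat⟩
  · exact hnR hR
  rcases hm with ⟨ρ, hρ, hconf⟩ | hm
  · exact hnconf ρ hρ hconf
  rcases hm β hβ hβC hβd hβx with hd | ⟨γ, hγ, hγC, y, hγy, hyx, hγapp, hγwins⟩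
  · exact h.not_discarded hβapp hd
  rcases hdefeat γ hγ hγC y hγy hyx with hd | ⟨ζ, hζ, hζC, ⟨z, hζz, hz⟩, hζapp, hsup⟩
  · exact h.symm.not_discarded hγapp hd
  · exact (hγwins ζ hζ hζC z hζz hz).elim (h.not_discarded hζapp) (· hsup)

theorem not_minusMOS (h : Compatible P Q) {x : SRule} (hp : plusMOS D P x) :
    ¬ minusMOS D Q x := by
  obtain ⟨⟨β, hβ, hβO, hβd, i, hβx, hβapp⟩, hdefeat⟩ := hp
  rintro (hdisc | ⟨γ, hγ, y, hyx, hγattack, hγwins⟩)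
  · exact h.not_discardedAt hβapp (hdisc β hβ hβO hβd i hβx)
  have hbeaten : ∀ ζ ∈ D.rules, ζ.mode = .O →
      (∃ k z, ζ.rexAt z k ∧ reinstates x y z ∧ ApplicableAt P ζ k) → (ζ, γ) ∉ D.sup := by
    rintro ζ hζ hζO ⟨k, z, hζz, hz, hζapp⟩
    exact (hγwins ζ hζ hζO k z hζz hz).resolve_left (h.not_discardedAt hζapp)
  rcases hγattack with ⟨hγO, j, hγy, hγapp⟩ | ⟨hγP, hγy, hγapp⟩
  · rcases (hdefeat γ hγ y hyx).1 hγO j hγy with hd | ⟨ζ, hζ, hζO, hζapp, hsup⟩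
    · exact h.symm.not_discardedAt hγapp hd
    · exact hbeaten ζ hζ hζO hζapp hsup
  · rcases (hdefeat γ hγ y hyx).2 hγP hγy with hd | ⟨ζ, hζ, hζO, hζapp, hsup⟩
    · exact h.symm.not_discarded hγapp hd
    · exact hbeaten ζ hζ hζO hζapp hsup

theorem not_minusMPS (h : Compatible P Q) {x : SRule} (hp : plusMPS D P x) :
    ¬ minusMPS D Q x := by
  rintro ⟨hnO, hm⟩
  rcases hp with hO | ⟨⟨β, hβ, hβP, hβd, hβx, hβapp⟩, hdefeat⟩
  · exact h true .O _ hO hnO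
  rcases hm β hβ hβP hβd hβx with hd | ⟨γ, hγ, hγO, y, hyx, ⟨j, hγy, hγapp⟩, hγwins⟩
  · exact h.not_discarded hβapp hd
  rcases hdefeat γ hγ hγO y hyx j hγy with hd | ⟨ζ, hζ, hζattack, hsup⟩
  · exact h.symm.not_discardedAt hγapp hd
  rcases hζattack with ⟨hζP, z, hζz, hz, hζapp⟩ | ⟨hζO, k, z, hζz, hz, hζapp⟩
  · exact ((hγwins ζ hζ).1 hζP z hζz hz).elim (h.not_discarded hζapp) (· hsup)
  · exact ((hγwins ζ hζ).2 hζO k z hζz hz).elim (h.not_discardedAt hζapp) (· hsup)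

theorem not_minusMCC (h : Compatible P Q) {x : SRule} (hp : plusMCC D P x) :
    ¬ minusMCC D Q x := by
  rintro ⟨hnR, hm⟩
  rcases hp with hR | ⟨hnconf, β, hβ, hβC, hβd, hβx, hβapp, hdefeat⟩
  · exact hnR hR
  rcases hm with ⟨ω, hω, hconf⟩ | hm
  · exact hnconf ω hω hconf
  rcases hm β hβ hβC hβd hβx with hd | ⟨γ, hγ, hγC, hγβ, hγapp, hγwins⟩
  · exact h.not_discarded hβapp hd
  rcases hdefeat γ hγ hγC hγβ with hd | ⟨ζ, hζ, hζC, hζγ, hζapp, hsup⟩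
  · exact h.symm.not_discarded hγapp hd
  · exact (hγwins ζ hζ hζC hζγ).elim (h.not_discarded hζapp) (· hsup)

theorem not_minusMOC (h : Compatible P Q) {x : SRule} (hp : plusMOC D P x) :
    ¬ minusMOC D Q x := by
  obtain ⟨β, hβ, hβO, hβd, ⟨i, hβx, hβapp⟩, hdefeat⟩ := hp
  intro hm
  rcases hm β hβ hβO hβd i hβx with hd | ⟨γ, hγ, hγβ, hγattack, hγwins⟩
  · exact h.not_discardedAt hβapp hd
  have hbeaten : ¬ defeatMOC D P γ := by
    rintro ⟨ζ, hζ, hζO, hζγ, ⟨k, z, hζz, hζapp⟩, hsup⟩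
    exact (hγwins ζ hζ hζO hζγ).elim (fun hd => h.not_discardedAt hζapp (hd k z hζz)) (· hsup)
  rcases hγattack with ⟨hγO, j, y, hγy, hγapp⟩ | ⟨hγP, hγapp⟩
  · exact ((hdefeat γ hγ hγβ).1 hγO j y hγy).elim (h.symm.not_discardedAt hγapp) hbeaten
  · exact ((hdefeat γ hγ hγβ).2 hγP).elim (h.symm.not_discarded hγapp) hbeaten

theorem not_minusMPC (h : Compatible P Q) {x : SRule} (hp : plusMPC D P x) :
    ¬ minusMPC D Q x := by
  obtain ⟨β, hβ, hβP, hβd, hβx, hβapp, hdefeat⟩ := hp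
  intro hm
  rcases hm β hβ hβP hβd hβx with hd | ⟨γ, hγ, hγβ, hγattack, hγwins⟩
  · exact h.not_discarded hβapp hd
  have hbeaten : ¬ defeatMPC D P γ := by
    rintro ⟨ζ, hζ, hζγ, hζattack, hsup⟩
    refine (hγwins ζ hζ hζγ).elim (fun hd => ?_) (· hsup)
    rcases hζattack with ⟨hζO, k, z, hζz, hζapp⟩ | ⟨hζP, hζapp⟩
    · exact h.not_discardedAt hζapp (hd.1 hζO k z hζz)
    · exact h.not_discarded hζapp (hd.2 hζP)
  rcases hγattack with ⟨hγO, j, y, hγy, hγapp⟩ | ⟨hγP, hγapp⟩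
  · exact ((hdefeat γ hγ hγβ).1 hγO j y hγy).elim (h.symm.not_discardedAt hγapp) hbeaten
  · exact ((hdefeat γ hγ hγβ).2 hγP).elim (h.symm.not_discarded hγapp) hbeaten

theorem not_cond_false (h : Compatible P Q) {V : Variant} {m : Modality} {x : Concl}
    (hp : Cond D V P (true, m, x)) : ¬ Cond D V Q (false, m, x) := by
  cases x with
  | lit l =>
    cases m with
    | C => exact h.not_minusC hp
    | O => exact h.not_minusO hp
    | P => exact h.not_minusP hp
  | rul r b =>
    cases V <;> cases m
    · exact h.not_minusMCS hp
    · exact h.not_minusMOS hp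
    · exact h.not_minusMPS hp
    · exact h.not_minusMCC hp
    · exact h.not_minusMOC hp
    · exact h.not_minusMPC hp

end Compatible

theorem provesAt_iff_exists_cond {D : Theory} {V : Variant} {n : ℕ} {t : Tag} :
    ProvesAt D V n t ↔ ∃ j < n, Cond D V (ProvesAt D V j) t := by
  induction n with
  | zero => simp [ProvesAt]
  | succ n ih => rw [ProvesAt, ih, Nat.exists_lt_succ_right]

theorem compatible_provesAt (D : Theory) (V : Variant) (n k : ℕ) :
    Compatible (ProvesAt D V n) (ProvesAt D V k) := by
  induction hs : n + k using Nat.strong_induction_on generalizing n k with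
  | _ s ih =>
    intro b m x hn hk
    obtain ⟨i, hi, hcondn⟩ := provesAt_iff_exists_cond.1 hn
    obtain ⟨j, hj, hcondk⟩ := provesAt_iff_exists_cond.1 hk
    have hij : Compatible (ProvesAt D V i) (ProvesAt D V j) := ih (i + j) (by omega) i j rfl
    cases b
    · exact hij.symm.not_cond_false hcondk hcondn
    · exact hij.not_cond_false hcondn hcondk

/-- **Coherence** (Theorem 1). For every defeasible deontic theory `D`, every
conclusion `x` (a literal or a rule), every proof tag (any of `∂_C, ∂_O, ∂_P`
on literals or `∂^m_C, ∂^m_O, ∂^m_P` on rules) and each variant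
`L ∈ {S, C}` of Defeasible Deontic Logic with meta-rules, it is not the case
that both `D ⊢_L +#x` and `D ⊢_L −#x`. -/
theorem coherence (D : Theory) (L : Variant) (m : Modality) (x : Concl) :
    ¬ (Proves D L (true, m, x) ∧ Proves D L (false, m, x)) := by
  rintro ⟨⟨n, hplus⟩, ⟨k, hminus⟩⟩
  exact compatible_provesAt D L n k true m x hplus hminus

end DDL
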